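/- u ∈ L²(Ω) solves the problem of minimizing Ĵ(η) = (1/2)‖Sη − g_Γ‖²_{L²(Γ)} + (ν/2)‖η‖²_{L²(Ω)} over U_ad if and only if there exists p ∈ H¹₀(Ω) such that: (i) u ∈ U_ad and (p + νu, v − u)_{L²(Ω)} ≥ 0 for all v ∈ U_ad, and (ii) a(v, p) = ∫_Γ (Su − g_Γ) v dA for all v ∈ H¹₀(Ω). -/
import Mathlib


open MeasureTheory
open scoped RealInnerProductSpace

/-- First-order optimality conditions: `u ∈ L²(Ω)` solves the
surface control problem `min Ĵ(η) = ½‖Sη − g_Γ‖²_{L²(Γ)} + (ν/2)‖η‖²_{L²(Ω)}`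
over `U_ad` iff there is an adjoint state `p ∈ H¹₀(Ω)` with
(i) `u ∈ U_ad` and `(p + νu, v − u)_{L²(Ω)} ≥ 0` for all `v ∈ U_ad`, and
(ii) `a(v, p) = ∫_Γ (Su − g_Γ) v dA` for all `v ∈ H¹₀(Ω)`.
Here `V = H¹₀(Ω)` with embedding `ι : V ↪ L²(Ω) = Lp ℝ 2 μ`, `G = L²(Γ)`,
`T : V → G` the trace operator, `S` the elliptic solution operator, `a` the
coercive continuous bilinear form, and the surface integral in (ii) is the
`L²(Γ)` inner product `(Su − g_Γ, v|_Γ)_{L²(Γ)}`. -/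
theorem stmt_4 {X : Type*} [MeasurableSpace X] (μ : Measure X) [IsFiniteMeasure μ]
    {V G : Type*} [NormedAddCommGroup V] [InnerProductSpace ℝ V] [CompleteSpace V]
    [NormedAddCommGroup G] [InnerProductSpace ℝ G] [CompleteSpace G]
    (ι : V →L[ℝ] Lp ℝ 2 μ)
    (a : V →L[ℝ] V →L[ℝ] ℝ)
    (α : ℝ) (hα : 0 < α) (hcoer : ∀ v : V, α * ‖v‖ ^ 2 ≤ a v v)
    (S : Lp ℝ 2 μ →L[ℝ] V)
    (hS : ∀ (η : Lp ℝ 2 μ) (v : V), a (S η) v = ⟪η, ι v⟫)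
    (T : V →L[ℝ] G)
    (gΓ : G) (ν : ℝ) (hν : 0 < ν)
    (ea eb : EReal) (hab : ea < eb)
    (Uad : Set (Lp ℝ 2 μ))
    (hUad : Uad = {η : Lp ℝ 2 μ |
      ∀ᵐ x ∂μ, ea ≤ ((η : X → ℝ) x : EReal) ∧ ((η : X → ℝ) x : EReal) ≤ eb})
    (u : Lp ℝ 2 μ) :
    (u ∈ Uad ∧ ∀ η ∈ Uad,
        (1 / 2) * ‖T (S u) - gΓ‖ ^ 2 + (ν / 2) * ‖u‖ ^ 2 ≤
          (1 / 2) * ‖T (S η) - gΓ‖ ^ 2 + (ν / 2) * ‖η‖ ^ 2) ↔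
      ∃ p : V,
        (u ∈ Uad ∧ ∀ v ∈ Uad, 0 ≤ ⟪ι p + ν • u, v - u⟫) ∧
        (∀ v : V, a v p = ⟪T (S u) - gΓ, T v⟫) := by
  classical
  set L : Lp ℝ 2 μ → ℝ := fun d => ⟪T (S u) - gΓ, T (S d)⟫ + ν * ⟪u, d⟫ with hLdef
  set Q : Lp ℝ 2 μ → ℝ := fun d => (1/2) * ‖T (S d)‖^2 + (ν/2) * ‖d‖^2 with hQdef
  clear_value L Q
  have hQ0 : ∀ d, 0 ≤ Q d := fun d => by
    have : (0:ℝ) ≤ ν := hν.le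
    simp only [hQdef]; positivity
  have expand : ∀ d : Lp ℝ 2 μ,
      (1/2) * ‖T (S (u + d)) - gΓ‖^2 + (ν/2) * ‖u + d‖^2 =
      ((1/2) * ‖T (S u) - gΓ‖^2 + (ν/2) * ‖u‖^2) + L d + Q d := by
    intro d
    have h1 : T (S (u + d)) - gΓ = (T (S u) - gΓ) + T (S d) := by
      rw [map_add, map_add]; abel
    rw [h1, norm_add_sq_real, norm_add_sq_real]
    simp only [hLdef, hQdef]; ring
  have hB : IsCoercive a.flip := by
    refine ⟨α, hα, fun v => ?_⟩
    have := hcoer v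
    simpa [ContinuousLinearMap.flip_apply, pow_two, ← mul_assoc] using this
  obtain ⟨p₀, hp₀⟩ : ∃ p : V, ∀ v, a v p = ⟪T (S u) - gΓ, T v⟫ := by
    refine ⟨hB.continuousLinearEquivOfBilin.symm
      (ContinuousLinearMap.adjoint T (T (S u) - gΓ)), fun v => ?_⟩
    have h1 := hB.continuousLinearEquivOfBilin_apply
      (hB.continuousLinearEquivOfBilin.symm (ContinuousLinearMap.adjoint T (T (S u) - gΓ))) v
    rw [hB.continuousLinearEquivOfBilin.apply_symm_apply,
      ContinuousLinearMap.adjoint_inner_left] at h1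
    simpa [ContinuousLinearMap.flip_apply] using h1.symm
  have hLrep : ∀ (p : V), (∀ v, a v p = ⟪T (S u) - gΓ, T v⟫) →
      ∀ d, L d = ⟪ι p + ν • u, d⟫ := by
    intro p hp d
    have h1 : ⟪T (S u) - gΓ, T (S d)⟫ = ⟪ι p, d⟫ := by
      rw [← hp (S d), hS d p, real_inner_comm]
    simp only [hLdef]
    rw [h1, inner_add_left, real_inner_smul_left]
  constructor
  · rintro ⟨huU, hmin⟩
    refine ⟨p₀, ⟨huU, ?_⟩, hp₀⟩
    intro v hv
    rw [← hLrep p₀ hp₀ (v - u)]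
    -- convexity of Uad
    have hmem : ∀ t : ℝ, 0 ≤ t → t ≤ 1 → u + t • (v - u) ∈ Uad := by
      intro t ht0 ht1
      rw [hUad] at hv ⊢
      have huU' := huU
      rw [hUad] at huU'
      simp only [Set.mem_setOf_eq] at hv huU' ⊢
      have hcoe : (↑(u + t • (v - u)) : X → ℝ) =ᵐ[μ]
          fun x => (u : X → ℝ) x + t * ((v : X → ℝ) x - (u : X → ℝ) x) := by
        filter_upwards [Lp.coeFn_add u (t • (v - u)), Lp.coeFn_smul t (v - u),
          Lp.coeFn_sub v u] with x h1 h2 h3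
        rw [h1, Pi.add_apply, h2, Pi.smul_apply, h3, Pi.sub_apply, smul_eq_mul]
      filter_upwards [huU', hv, hcoe] with x hux hvx hx
      obtain ⟨hu1, hu2⟩ := hux
      obtain ⟨hv1, hv2⟩ := hvx
      rw [hx]
      set A := (u : X → ℝ) x
      set B := (v : X → ℝ) x
      constructor
      · have hmin' : min A B ≤ A + t * (B - A) := by
          nlinarith [min_le_left A B, min_le_right A B]
        have hea : ea ≤ ((min A B : ℝ) : EReal) := by
          rcases min_cases A B with ⟨h, _⟩ | ⟨h, _⟩ <;> rw [h] <;> assumption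
        exact hea.trans (EReal.coe_le_coe_iff.mpr hmin')
      · have hmax' : A + t * (B - A) ≤ max A B := by
          nlinarith [le_max_left A B, le_max_right A B]
        have heb : ((max A B : ℝ) : EReal) ≤ eb := by
          rcases max_cases A B with ⟨h, _⟩ | ⟨h, _⟩ <;> rw [h] <;> assumption
        exact (EReal.coe_le_coe_iff.mpr hmax').trans heb
    have key : ∀ t : ℝ, 0 < t → t ≤ 1 → 0 ≤ L (v - u) + t * Q (v - u) := by
      intro t ht0 ht1
      have h2 := hmin _ (hmem t ht0.le ht1)
      rw [expand (t • (v - u))] at h2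
      have hLs : L (t • (v - u)) = t * L (v - u) := by
        simp only [hLdef, ContinuousLinearMap.map_smul, inner_smul_right]
        ring
      have hQs : Q (t • (v - u)) = t^2 * Q (v - u) := by
        simp only [hQdef, ContinuousLinearMap.map_smul, norm_smul, Real.norm_eq_abs, mul_pow, sq_abs]
        ring
      rw [hLs, hQs] at h2
      have h3 : 0 ≤ t * (L (v - u) + t * Q (v - u)) := by nlinarith
      by_contra h
      push_neg at h
      nlinarith [mul_pos ht0 (neg_pos.mpr h)]
    have hfin : ∀ ε : ℝ, 0 < ε → (0:ℝ) ≤ L (v - u) + ε := by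
      intro ε hε
      set t := min 1 (ε / (Q (v - u) + 1)) with htdef
      have hQ1 : (0:ℝ) < Q (v - u) + 1 := by linarith [hQ0 (v - u)]
      have ht0 : 0 < t := lt_min one_pos (div_pos hε hQ1)
      have ht1 : t ≤ 1 := min_le_left _ _
      have h4 := key t ht0 ht1
      have h6 : t ≤ ε / (Q (v - u) + 1) := min_le_right _ _
      have h7 : t * (Q (v - u) + 1) ≤ ε := by
        rw [← div_mul_cancel₀ ε (ne_of_gt hQ1)]
        exact mul_le_mul_of_nonneg_right h6 hQ1.le
      have h5 : t * Q (v - u) ≤ ε := by nlinarith [hQ0 (v - u)]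
      linarith
    exact le_of_forall_pos_le_add hfin
  · rintro ⟨p, ⟨huU, hineq⟩, hadj⟩
    refine ⟨huU, fun v hv => ?_⟩
    have h2 := expand (v - u)
    have h3 : u + (v - u) = v := by abel
    rw [h3] at h2
    rw [h2]
    have h4 := hineq v hv
    rw [← hLrep p hadj (v - u)] at h4
    linarith [hQ0 (v - u)]
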